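/- arXiv:2103.14352 — 2 statements merged into one kernel-verified Lean document; each statement's English description precedes it below -/
import Mathlib

section
/- Suppose (u_h, r_h, w_h, p_h, s_h) solves the conservative semi-discrete LDG Scheme C2 on [0,T]. Then for every t ∈ [0,T]: (d/dt) ∫_a^b w_h(t,x) dx = 0 (conservation of the quantity E₁) and (d/dt) ∫_a^b u_h(t,x)² dx = 0 (conservation of the energy E₂). -/
open Polynomial Set

noncomputable section

namespace FW

variable {N : ℕ}

/-- Minus trace `ω⁻` at interface `j+1/2` (right end of cell `j`). -/
def trM (x : Fin (N + 1) → ℝ) (ω : Fin N → Polynomial ℝ) (j : Fin N) : ℝ :=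
  (ω j).eval (x j.succ)

/-- Plus trace `ω⁺` at interface `j+1/2` (left end of the next cell, cyclically). -/
def trP [NeZero N] (x : Fin (N + 1) → ℝ) (ω : Fin N → Polynomial ℝ) (j : Fin N) : ℝ :=
  (ω (j + 1)).eval (x (j + 1).castSucc)

/-- Average trace `{ω}`. -/
def trA [NeZero N] (x : Fin (N + 1) → ℝ) (ω : Fin N → Polynomial ℝ) (j : Fin N) : ℝ :=
  (trP x ω j + trM x ω j) / 2

/-- Jump `[ω]`. -/
def jmp [NeZero N] (x : Fin (N + 1) → ℝ) (ω : Fin N → Polynomial ℝ) (j : Fin N) : ℝ :=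
  trP x ω j - trM x ω j

/-- Cell L² pairing `(u, φ)_{I_j}` of a piecewise polynomial with a test polynomial. -/
def ipj (x : Fin (N + 1) → ℝ) (u : Fin N → Polynomial ℝ) (j : Fin N) (φ : Polynomial ℝ) : ℝ :=
  ∫ t in (x j.castSucc)..(x j.succ), (u j).eval t * φ.eval t

/-- Cell pairing `(f∘u, φ)_{I_j}`. -/
def ipfj (x : Fin (N + 1) → ℝ) (f : ℝ → ℝ) (u : Fin N → Polynomial ℝ) (j : Fin N)
    (φ : Polynomial ℝ) : ℝ :=
  ∫ t in (x j.castSucc)..(x j.succ), f ((u j).eval t) * φ.eval t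

/-- Boundary pairing `⟨g, φ⟩_{I_j}` for interface values `g`. -/
def bdj [NeZero N] (x : Fin (N + 1) → ℝ) (g : Fin N → ℝ) (j : Fin N) (φ : Polynomial ℝ) : ℝ :=
  g j * φ.eval (x j.succ) - g (j - 1) * φ.eval (x j.castSucc)

/-- Membership in the space `V_h^k` of piecewise polynomials of degree at most `k`. -/
def memV (k : ℕ) (ω : Fin N → Polynomial ℝ) : Prop :=
  ∀ j, (ω j).degree ≤ (k : WithBot ℕ)

/-- `L⁻(ω, φ)`. -/
def Lm [NeZero N] (x : Fin (N + 1) → ℝ) (ω φ : Fin N → Polynomial ℝ) : ℝ :=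
  ∑ j, (-(ipj x ω j (derivative (φ j))) + bdj x (trM x ω) j (φ j))

/-- `L⁺(ω, φ)`. -/
def Lp [NeZero N] (x : Fin (N + 1) → ℝ) (ω φ : Fin N → Polynomial ℝ) : ℝ :=
  ∑ j, (-(ipj x ω j (derivative (φ j))) + bdj x (trP x ω) j (φ j))

/-- `L^c(ω, φ)`. -/
def Lc [NeZero N] (x : Fin (N + 1) → ℝ) (ω φ : Fin N → Polynomial ℝ) : ℝ :=
  ∑ j, (-(ipj x ω j (derivative (φ j))) + bdj x (trA x ω) j (φ j))

/-- Godunov numerical flux. -/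
def godunov (f : ℝ → ℝ) (c d : ℝ) : ℝ :=
  if c < d then sInf (f '' Set.Icc c d) else sSup (f '' Set.Icc d c)

/-- Conservative numerical flux for `f(u) = u^p/p`, `F(u) = u^(p+1)/(p(p+1))`. -/
def consFlux (p : ℕ) (c d : ℝ) : ℝ :=
  if c = d then c ^ p / (p : ℝ)
  else (d ^ (p + 1) / ((p : ℝ) * ((p : ℝ) + 1)) - c ^ (p + 1) / ((p : ℝ) * ((p : ℝ) + 1))) / (d - c)

/-- Dissipative (Godunov-flux) nonlinear form `N^d`. -/
def Nd [NeZero N] (x : Fin (N + 1) → ℝ) (f : ℝ → ℝ) (ω φ : Fin N → Polynomial ℝ) : ℝ :=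
  ∑ j, (-(ipfj x f ω j (derivative (φ j)))
    + bdj x (fun i => godunov f (trM x ω i) (trP x ω i)) j (φ j))

/-- Conservative-flux nonlinear form `N^c`. -/
def Nc [NeZero N] (x : Fin (N + 1) → ℝ) (p : ℕ) (ω φ : Fin N → Polynomial ℝ) : ℝ :=
  ∑ j, (-(ipfj x (fun w => w ^ p / (p : ℝ)) ω j (derivative (φ j)))
    + bdj x (fun i => consFlux p (trM x ω i) (trP x ω i)) j (φ j))

end FW

/-!
Write `(·,·)` for the L² pairing on `V_h^k` and `L` for the central-flux form `Lc`. Summed over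
the cells, Scheme C2 reads `(u,φ) - L(r,φ) = (w,φ)`, `(r,φ) = L(u,φ)`,
`(w_t,φ) + (s,φ) = L(p_h,φ)`, `(p_h,φ) = L(s,φ) - (u,φ)` and `(s,φ) = N(u,φ)`. Integration by
parts and telescoping over the periodic interfaces make `L` antisymmetric and give
`L(ω,1) = N(u,1) = 0`; because `f̂` is the secant slope of `F`, also `N(u,u) = 0`.
Testing with `φ = 1` gives `(w_t,1) = 0`. For the energy, differentiate the first two relations
in time (coefficientwise, which is enough because all degrees are at most `k`) and test the
relations with `u_t`, `s`, `p_h` and `r_t`: in `(u,u_t) = L(s,u_t) - (p_h,u_t)` both terms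
equal `-(s,r_t)`.
-/

theorem eq_of_hasDerivWithinAt_of_eqOn {f g : ℝ → ℝ} {f' g' : ℝ} {s : Set ℝ} {t : ℝ}
    (hs : UniqueDiffWithinAt ℝ s t) (ht : t ∈ s) (hf : HasDerivWithinAt f f' s t)
    (hg : HasDerivWithinAt g g' s t) (hfg : ∀ σ ∈ s, f σ = g σ) : f' = g' :=
  hs.eq_deriv _ hf (hg.congr hfg (hfg t ht))

namespace Polynomial

def HasCoeffDerivWithinAt (U : ℝ → ℝ[X]) (U' : ℝ[X]) (s : Set ℝ) (t : ℝ) : Prop :=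
  ∀ m, HasDerivWithinAt (fun σ => (U σ).coeff m) (U'.coeff m) s t

section CoeffDeriv

variable {U V : ℝ → ℝ[X]} {U' V' : ℝ[X]} {s : Set ℝ} {t : ℝ}

theorem HasCoeffDerivWithinAt.mul (hU : HasCoeffDerivWithinAt U U' s t)
    (hV : HasCoeffDerivWithinAt V V' s t) :
    HasCoeffDerivWithinAt (fun σ => U σ * V σ) (U' * V t + U t * V') s t := by
  intro m
  simp only [coeff_add, coeff_mul, ← Finset.sum_add_distrib]
  exact HasDerivWithinAt.fun_sum fun i _ => (hU i.1).mul (hV i.2)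

theorem map_eq_sum_coeff_smul {F : Type*} [AddCommGroup F] [Module ℝ F] (L : ℝ[X] →ₗ[ℝ] F)
    {P : ℝ[X]} {n : ℕ} (hP : P.degree ≤ n) :
    L P = ∑ m ∈ Finset.range (n + 1), P.coeff m • L (X ^ m) := by
  conv_lhs =>
    rw [P.as_sum_range' (n + 1) (Nat.lt_succ_of_le (natDegree_le_iff_degree_le.mpr hP))]
  simp only [map_sum, ← smul_X_eq_monomial, map_smul]

theorem HasCoeffDerivWithinAt.hasDerivWithinAt_map {F : Type*} [NormedAddCommGroup F]
    [NormedSpace ℝ F] {n : ℕ} (hU : HasCoeffDerivWithinAt U U' s t) (ht : t ∈ s)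
    (hdeg : ∀ σ ∈ s, (U σ).degree ≤ n) (hdeg' : U'.degree ≤ n)
    (L : ℝ[X] →ₗ[ℝ] F) :
    HasDerivWithinAt (fun σ => L (U σ)) (L U') s t := by
  rw [map_eq_sum_coeff_smul L hdeg']
  exact (HasDerivWithinAt.fun_sum fun m _ => (hU m).smul_const _).congr
    (fun σ hσ => map_eq_sum_coeff_smul L (hdeg σ hσ)) (map_eq_sum_coeff_smul L (hdeg t ht))

end CoeffDeriv

@[simps]
def integralMulₗ (c d : ℝ) (φ : ℝ[X]) : ℝ[X] →ₗ[ℝ] ℝ where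
  toFun P := ∫ y in c..d, P.eval y * φ.eval y
  map_add' P Q := by
    simp only [eval_add, add_mul]
    exact intervalIntegral.integral_add ((P.continuous.mul φ.continuous).intervalIntegrable _ _)
      ((Q.continuous.mul φ.continuous).intervalIntegrable _ _)
  map_smul' a P := by
    simp only [eval_smul, smul_eq_mul, mul_assoc, intervalIntegral.integral_const_mul,
      RingHom.id_apply]

theorem integral_mul_derivative_add (P Q : ℝ[X]) (c d : ℝ) :
    (∫ y in c..d, P.eval y * (derivative Q).eval y)
        + ∫ y in c..d, Q.eval y * (derivative P).eval y
      = P.eval d * Q.eval d - P.eval c * Q.eval c := by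
  rw [← intervalIntegral.integral_add
    ((P.continuous.fun_mul (derivative Q).continuous).intervalIntegrable _ _)
    ((Q.continuous.fun_mul (derivative P).continuous).intervalIntegrable _ _),
    ← intervalIntegral.integral_deriv_mul_eq_sub (fun y _ => P.hasDerivAt y)
    (fun y _ => Q.hasDerivAt y) ((derivative P).continuous.intervalIntegrable _ _)
    ((derivative Q).continuous.intervalIntegrable _ _)]
  exact intervalIntegral.integral_congr fun y _ => by ring

theorem integral_comp_eval_mul_derivative {G g : ℝ → ℝ} (hG : ∀ y, HasDerivAt G (g y) y)
    (hg : Continuous g) (P : ℝ[X]) (c d : ℝ) :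
    ∫ y in c..d, g (P.eval y) * (derivative P).eval y = G (P.eval d) - G (P.eval c) :=
  intervalIntegral.integral_eq_sub_of_hasDerivAt (fun y _ => (hG _).comp y (P.hasDerivAt y))
    (((hg.comp P.continuous).mul (derivative P).continuous).intervalIntegrable _ _)

end Polynomial

namespace FW

-- At `p = 0` both sides are junk zeros, since `x / 0 = 0`.
theorem hasDerivAt_pow_succ_div (p : ℕ) (v : ℝ) :
    HasDerivAt (fun v : ℝ => v ^ (p + 1) / ((p : ℝ) * ((p : ℝ) + 1)))
      (v ^ p / (p : ℝ)) v := by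
  refine ((hasDerivAt_pow (p + 1) v).div_const _).congr_deriv ?_
  rw [mul_comm (p : ℝ), Nat.add_sub_cancel, Nat.cast_succ,
    mul_div_mul_left _ _ (by positivity : (p : ℝ) + 1 ≠ 0)]

theorem consFlux_mul_sub_eq (p : ℕ) (c d : ℝ) :
    consFlux p c d * d - d ^ (p + 1) / ((p : ℝ) * ((p : ℝ) + 1))
      = consFlux p c d * c - c ^ (p + 1) / ((p : ℝ) * ((p : ℝ) + 1)) := by
  unfold consFlux
  split_ifs with h
  · rw [h]
  · field_simp [sub_ne_zero.mpr (Ne.symm h)]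
    ring

variable {N : ℕ} (x : Fin (N + 1) → ℝ)

def pairing (a b : Fin N → ℝ[X]) : ℝ :=
  ∑ j, ipj x a j (b j)

theorem pairing_comm (a b : Fin N → ℝ[X]) : pairing x a b = pairing x b a :=
  Finset.sum_congr rfl fun _ _ => intervalIntegral.integral_congr fun _ _ => mul_comm _ _

theorem memV_one {k : ℕ} : memV k (1 : Fin N → ℝ[X]) := fun _ =>
  degree_one_le.trans (WithBot.coe_le_coe.mpr k.zero_le)

section Central

variable [NeZero N]

theorem sum_sub_sub_one {M : Type*} [AddCommGroup M] (g : Fin N → M) :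
    ∑ j, (g j - g (j - 1)) = 0 := by
  rw [Finset.sum_sub_distrib, sub_eq_zero]
  exact (Fintype.sum_equiv (Equiv.subRight 1) _ _ fun _ => rfl).symm

theorem trP_sub_one (ω : Fin N → ℝ[X]) (j : Fin N) :
    trP x ω (j - 1) = (ω j).eval (x j.castSucc) := by
  rw [trP, sub_add_cancel]

theorem ipj_derivative_add (a b : Fin N → ℝ[X]) (j : Fin N) :
    ipj x a j (derivative (b j)) + ipj x b j (derivative (a j))
      = trM x a j * trM x b j - trP x a (j - 1) * trP x b (j - 1) := by
  rw [trP_sub_one, trP_sub_one]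
  exact integral_mul_derivative_add (a j) (b j) _ _

/-- After integrating by parts, the central-flux interface terms of cell `j` combine into
`(a⁺b⁻ + a⁻b⁺)/2` at `j + 1/2` minus the same at `j - 1/2`, so the sum telescopes. -/
theorem Lc_add_Lc_swap (a b : Fin N → ℝ[X]) : Lc x a b + Lc x b a = 0 := by
  rw [Lc, Lc, ← Finset.sum_add_distrib,
    ← sum_sub_sub_one fun j => (trP x a j * trM x b j + trM x a j * trP x b j) / 2]
  refine Finset.sum_congr rfl fun j _ => ?_
  have hibp := ipj_derivative_add x a b j
  simp only [bdj, trA, trM, ← trP_sub_one] at hibp ⊢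
  linear_combination -hibp

theorem Lc_self (a : Fin N → ℝ[X]) : Lc x a a = 0 := by
  linarith [Lc_add_Lc_swap x a a]

theorem sum_bdj_one (g : Fin N → ℝ) : ∑ j, bdj x g j 1 = 0 := by
  simpa [bdj] using sum_sub_sub_one g

theorem Lc_one (a : Fin N → ℝ[X]) : Lc x a 1 = 0 := by
  simpa [Lc, ipj] using sum_bdj_one x (trA x a)

theorem Nc_one (p : ℕ) (u : Fin N → ℝ[X]) : Nc x p u 1 = 0 := by
  simpa [Nc, ipfj] using sum_bdj_one x _

theorem Nc_self (p : ℕ) (u : Fin N → ℝ[X]) : Nc x p u u = 0 := by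
  rw [Nc, ← sum_sub_sub_one fun j => consFlux p (trM x u j) (trP x u j) * trP x u j
    - trP x u j ^ (p + 1) / ((p : ℝ) * ((p : ℝ) + 1))]
  refine Finset.sum_congr rfl fun j _ => ?_
  have hF := integral_comp_eval_mul_derivative (hasDerivAt_pow_succ_div p)
    ((continuous_pow p).div_const _) (u j) (x j.castSucc) (x j.succ)
  simp only [ipfj, bdj, hF, trM, ← trP_sub_one]
  linear_combination -consFlux_mul_sub_eq p ((u j).eval (x j.succ)) (trP x u j)

theorem pairing_eq_zero_of_C2 {k p : ℕ} {u u' r' w' ph sf : Fin N → ℝ[X]} (hu : memV k u)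
    (hu' : memV k u') (hr' : memV k r') (hph : memV k ph) (hsf : memV k sf)
    (h1 : ∀ φ, memV k φ → pairing x u' φ - Lc x r' φ = pairing x w' φ)
    (h2 : ∀ φ, memV k φ → pairing x r' φ = Lc x u' φ)
    (h3 : ∀ φ, memV k φ → pairing x w' φ + pairing x sf φ = Lc x ph φ)
    (h4 : ∀ φ, memV k φ → pairing x ph φ = Lc x sf φ - pairing x u φ)
    (h5 : ∀ φ, memV k φ → pairing x sf φ = Nc x p u φ) :
    pairing x u u' = 0 := by
  have hsfu : pairing x sf u = 0 := (h5 u hu).trans (Nc_self x p u)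
  have hw'ph : pairing x w' ph = 0 := by
    linarith [h3 ph hph, h4 sf hsf, Lc_self x ph, Lc_self x sf, pairing_comm x ph sf,
      pairing_comm x u sf]
  have hw'r' : pairing x w' r' = 0 := by
    linarith [h1 r' hr', h2 u' hu', Lc_self x r', Lc_self x u', pairing_comm x u' r']
  have hphu' : pairing x ph u' = -pairing x sf r' := by
    linarith [h1 ph hph, h3 r' hr', Lc_add_Lc_swap x r' ph, pairing_comm x ph u']
  have hLsu' : Lc x sf u' = -pairing x sf r' := by
    linarith [h2 sf hsf, Lc_add_Lc_swap x sf u', pairing_comm x r' sf]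
  linarith [h4 u' hu']

end Central

def HasVhDerivWithinAt (k : ℕ) (R : ℝ → Fin N → ℝ[X]) (R' : Fin N → ℝ[X]) (s : Set ℝ)
    (t : ℝ) : Prop :=
  (∀ σ ∈ s, memV k (R σ)) ∧ memV k R' ∧
    ∀ j, HasCoeffDerivWithinAt (fun σ => R σ j) (R' j) s t

namespace HasVhDerivWithinAt

variable {k : ℕ} {R : ℝ → Fin N → ℝ[X]} {R' : Fin N → ℝ[X]} {s : Set ℝ} {t : ℝ}
  (hR : HasVhDerivWithinAt k R R' s t) (ht : t ∈ s)
include hR ht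

theorem eval (j : Fin N) (y : ℝ) :
    HasDerivWithinAt (fun σ => (R σ j).eval y) ((R' j).eval y) s t :=
  (hR.2.2 j).hasDerivWithinAt_map ht (fun σ hσ => hR.1 σ hσ j) (hR.2.1 j) (leval y)

theorem ipj (j : Fin N) (φ : ℝ[X]) :
    HasDerivWithinAt (fun σ => FW.ipj x (R σ) j φ) (FW.ipj x R' j φ) s t :=
  (hR.2.2 j).hasDerivWithinAt_map ht (fun σ hσ => hR.1 σ hσ j) (hR.2.1 j)
    (integralMulₗ _ _ φ)

theorem pairing (φ : Fin N → ℝ[X]) :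
    HasDerivWithinAt (fun σ => FW.pairing x (R σ) φ) (FW.pairing x R' φ) s t :=
  HasDerivWithinAt.fun_sum fun j _ => hR.ipj x ht j (φ j)

theorem Lc [NeZero N] (φ : Fin N → ℝ[X]) :
    HasDerivWithinAt (fun σ => FW.Lc x (R σ) φ) (FW.Lc x R' φ) s t := by
  simp only [FW.Lc, bdj, trA, trP, trM]
  exact HasDerivWithinAt.fun_sum fun j _ => (hR.ipj x ht j _).neg.add <|
    ((((hR.eval ht _ _).add (hR.eval ht _ _)).div_const 2).mul_const _).sub
      ((((hR.eval ht _ _).add (hR.eval ht _ _)).div_const 2).mul_const _)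

theorem sum_integral :
    HasDerivWithinAt (fun σ => ∑ j, ∫ y in x j.castSucc..x j.succ, (R σ j).eval y)
      (FW.pairing x R' 1) s t := by
  simpa [FW.pairing, FW.ipj] using hR.pairing x ht 1

theorem sum_integral_sq :
    HasDerivWithinAt (fun σ => ∑ j, ∫ y in x j.castSucc..x j.succ, (R σ j).eval y ^ 2)
      (2 * FW.pairing x (R t) R') s t := by
  have hmul {P Q : ℝ[X]} (hP : P.degree ≤ k) (hQ : Q.degree ≤ k) :
      (P * Q).degree ≤ ↑(k + k) :=
    (degree_mul_le _ _).trans (by rw [Nat.cast_add]; exact add_le_add hP hQ)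
  have hsq (j : Fin N) := ((hR.2.2 j).mul (hR.2.2 j)).hasDerivWithinAt_map ht
    (fun σ hσ => hmul (hR.1 σ hσ j) (hR.1 σ hσ j))
    ((degree_add_le _ _).trans (max_le (hmul (hR.2.1 j) (hR.1 t ht j))
      (hmul (hR.1 t ht j) (hR.2.1 j))))
    (integralMulₗ (x j.castSucc) (x j.succ) 1)
  have h := HasDerivWithinAt.fun_sum (u := Finset.univ) fun j _ => hsq j
  simp only [integralMulₗ_apply, eval_add, eval_mul, eval_one, mul_one] at h
  simp only [sq]
  refine h.congr_deriv ?_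
  nth_rw 1 [two_mul, FW.pairing_comm]
  simp only [FW.pairing, FW.ipj, ← Finset.sum_add_distrib]
  exact Finset.sum_congr rfl fun j _ => intervalIntegral.integral_add
    (((R' j).continuous.fun_mul (R t j).continuous).intervalIntegrable _ _)
    (((R t j).continuous.fun_mul (R' j).continuous).intervalIntegrable _ _)

end HasVhDerivWithinAt

theorem hasDerivWithinAt_sum_integral_sq_eq_zero [NeZero N] {k p : ℕ} {s : Set ℝ} {t : ℝ}
    (hs : UniqueDiffWithinAt ℝ s t) (ht : t ∈ s) {u r w : ℝ → Fin N → ℝ[X]}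
    {u' r' w' ph sf : Fin N → ℝ[X]} (du : HasVhDerivWithinAt k u u' s t)
    (dr : HasVhDerivWithinAt k r r' s t) (dw : HasVhDerivWithinAt k w w' s t)
    (hph : memV k ph) (hsf : memV k sf)
    (h1 : ∀ σ ∈ s, ∀ φ, memV k φ →
      pairing x (u σ) φ - Lc x (r σ) φ = pairing x (w σ) φ)
    (h2 : ∀ σ ∈ s, ∀ φ, memV k φ → pairing x (r σ) φ = Lc x (u σ) φ)
    (h3 : ∀ φ, memV k φ → pairing x w' φ + pairing x sf φ = Lc x ph φ)
    (h4 : ∀ φ, memV k φ → pairing x ph φ = Lc x sf φ - pairing x (u t) φ)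
    (h5 : ∀ φ, memV k φ → pairing x sf φ = Nc x p (u t) φ) :
    HasDerivWithinAt (fun σ => ∑ j, ∫ y in x j.castSucc..x j.succ, (u σ j).eval y ^ 2)
      0 s t := by
  have h1' (φ) (hφ : memV k φ) : pairing x u' φ - Lc x r' φ = pairing x w' φ :=
    eq_of_hasDerivWithinAt_of_eqOn hs ht ((du.pairing x ht φ).sub (dr.Lc x ht φ))
      (dw.pairing x ht φ) fun σ hσ => h1 σ hσ φ hφ
  have h2' (φ) (hφ : memV k φ) : pairing x r' φ = Lc x u' φ :=
    eq_of_hasDerivWithinAt_of_eqOn hs ht (dr.pairing x ht φ) (du.Lc x ht φ)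
      fun σ hσ => h2 σ hσ φ hφ
  refine (du.sum_integral_sq x ht).congr_deriv ?_
  rw [pairing_eq_zero_of_C2 x (du.1 t ht) du.2.1 dr.2.1 hph hsf h1' h2' h3 h4 h5, mul_zero]

end FW

theorem stmt16_general {N : ℕ} [NeZero N]
    (x : Fin (N + 1) → ℝ)
    (k : ℕ) (p : ℕ) (T : ℝ) (hT : 0 < T)
    (u u' r r' w w' ph s : ℝ → Fin N → Polynomial ℝ)
    (hdeg : ∀ t ∈ Set.Icc (0:ℝ) T,
      FW.memV k (u t) ∧ FW.memV k (u' t) ∧ FW.memV k (r t) ∧ FW.memV k (r' t)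
        ∧ FW.memV k (w t) ∧ FW.memV k (w' t) ∧ FW.memV k (ph t) ∧ FW.memV k (s t))
    (hderu : ∀ t ∈ Set.Icc (0:ℝ) T, ∀ (j : Fin N) (m : ℕ),
      HasDerivWithinAt (fun σ => (u σ j).coeff m) ((u' t j).coeff m) (Set.Icc (0:ℝ) T) t)
    (hderr : ∀ t ∈ Set.Icc (0:ℝ) T, ∀ (j : Fin N) (m : ℕ),
      HasDerivWithinAt (fun σ => (r σ j).coeff m) ((r' t j).coeff m) (Set.Icc (0:ℝ) T) t)
    (hderw : ∀ t ∈ Set.Icc (0:ℝ) T, ∀ (j : Fin N) (m : ℕ),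
      HasDerivWithinAt (fun σ => (w σ j).coeff m) ((w' t j).coeff m) (Set.Icc (0:ℝ) T) t)
    (heq1 : ∀ t ∈ Set.Icc (0:ℝ) T, ∀ (j : Fin N), ∀ φ : Polynomial ℝ,
      φ.degree ≤ (k : WithBot ℕ) →
      FW.ipj x (u t) j φ - FW.bdj x (FW.trA x (r t)) j φ
          + FW.ipj x (r t) j (Polynomial.derivative φ)
        = FW.ipj x (w t) j φ)
    (heq2 : ∀ t ∈ Set.Icc (0:ℝ) T, ∀ (j : Fin N), ∀ φ : Polynomial ℝ,
      φ.degree ≤ (k : WithBot ℕ) →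
      FW.ipj x (r t) j φ - FW.bdj x (FW.trA x (u t)) j φ
          + FW.ipj x (u t) j (Polynomial.derivative φ) = 0)
    (heq3 : ∀ t ∈ Set.Icc (0:ℝ) T, ∀ (j : Fin N), ∀ φ : Polynomial ℝ,
      φ.degree ≤ (k : WithBot ℕ) →
      FW.ipj x (w' t) j φ + FW.ipj x (s t) j φ
        = FW.bdj x (FW.trA x (ph t)) j φ
          - FW.ipj x (ph t) j (Polynomial.derivative φ))
    (heq4 : ∀ t ∈ Set.Icc (0:ℝ) T, ∀ (j : Fin N), ∀ φ : Polynomial ℝ,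
      φ.degree ≤ (k : WithBot ℕ) →
      FW.ipj x (ph t) j φ
        = FW.bdj x (FW.trA x (s t)) j φ
          - FW.ipj x (s t) j (Polynomial.derivative φ) - FW.ipj x (u t) j φ)
    (heq5 : ∀ t ∈ Set.Icc (0:ℝ) T, ∀ (j : Fin N), ∀ φ : Polynomial ℝ,
      φ.degree ≤ (k : WithBot ℕ) →
      FW.ipj x (s t) j φ
        = FW.bdj x (fun i => FW.consFlux p (FW.trM x (u t) i) (FW.trP x (u t) i)) j φ
          - FW.ipfj x (fun w => w ^ p / (p : ℝ)) (u t) j (Polynomial.derivative φ)) :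
    (∀ t ∈ Set.Icc (0:ℝ) T,
      HasDerivWithinAt (fun σ => ∑ j : Fin N, ∫ y in (x j.castSucc)..(x j.succ), (w σ j).eval y) 0 (Set.Icc (0:ℝ) T) t)
    ∧ (∀ t ∈ Set.Icc (0:ℝ) T,
      HasDerivWithinAt (fun σ => ∑ j : Fin N, ∫ y in (x j.castSucc)..(x j.succ), ((u σ j).eval y) ^ 2) 0 (Set.Icc (0:ℝ) T) t) := by
  have e1 : ∀ σ ∈ Icc (0:ℝ) T, ∀ φ, FW.memV k φ →
      FW.pairing x (u σ) φ - FW.Lc x (r σ) φ = FW.pairing x (w σ) φ := fun σ hσ φ hφ => by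
    simp only [FW.pairing, FW.Lc, ← Finset.sum_sub_distrib]
    exact Finset.sum_congr rfl fun j _ => by linarith [heq1 σ hσ j (φ j) (hφ j)]
  have e2 : ∀ σ ∈ Icc (0:ℝ) T, ∀ φ, FW.memV k φ →
      FW.pairing x (r σ) φ = FW.Lc x (u σ) φ := fun σ hσ φ hφ => by
    simp only [FW.pairing, FW.Lc]
    exact Finset.sum_congr rfl fun j _ => by linarith [heq2 σ hσ j (φ j) (hφ j)]
  have e3 : ∀ t ∈ Icc (0:ℝ) T, ∀ φ, FW.memV k φ →
      FW.pairing x (w' t) φ + FW.pairing x (s t) φ = FW.Lc x (ph t) φ := fun t ht φ hφ => by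
    simp only [FW.pairing, FW.Lc, ← Finset.sum_add_distrib]
    exact Finset.sum_congr rfl fun j _ => by linarith [heq3 t ht j (φ j) (hφ j)]
  have e4 : ∀ t ∈ Icc (0:ℝ) T, ∀ φ, FW.memV k φ →
      FW.pairing x (ph t) φ = FW.Lc x (s t) φ - FW.pairing x (u t) φ := fun t ht φ hφ => by
    simp only [FW.pairing, FW.Lc, ← Finset.sum_sub_distrib]
    exact Finset.sum_congr rfl fun j _ => by linarith [heq4 t ht j (φ j) (hφ j)]
  have e5 : ∀ t ∈ Icc (0:ℝ) T, ∀ φ, FW.memV k φ →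
      FW.pairing x (s t) φ = FW.Nc x p (u t) φ := fun t ht φ hφ => by
    simp only [FW.pairing, FW.Nc]
    exact Finset.sum_congr rfl fun j _ => by linarith [heq5 t ht j (φ j) (hφ j)]
  refine ⟨fun t ht => ?_, fun t ht => ?_⟩
  · have dw : FW.HasVhDerivWithinAt k w (w' t) (Icc 0 T) t :=
      ⟨fun σ hσ => (hdeg σ hσ).2.2.2.2.1, (hdeg t ht).2.2.2.2.2.1, hderw t ht⟩
    refine (dw.sum_integral x ht).congr_deriv ?_
    linarith [e3 t ht 1 FW.memV_one, e5 t ht 1 FW.memV_one, FW.Lc_one x (ph t), FW.Nc_one x p (u t)]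
  · obtain ⟨-, hu', -, hr', -, hw', hph, hs⟩ := hdeg t ht
    exact FW.hasDerivWithinAt_sum_integral_sq_eq_zero x (uniqueDiffOn_Icc hT t ht) ht
      ⟨fun σ hσ => (hdeg σ hσ).1, hu', hderu t ht⟩
      ⟨fun σ hσ => (hdeg σ hσ).2.2.1, hr', hderr t ht⟩
      ⟨fun σ hσ => (hdeg σ hσ).2.2.2.2.1, hw', hderw t ht⟩
      hph hs e1 e2 (e3 t ht) (e4 t ht) (e5 t ht)

theorem stmt16 {N : ℕ} [NeZero N] (hN : 1 ≤ N) (a b : ℝ) (hab : a < b)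
    (x : Fin (N + 1) → ℝ) (hx : StrictMono x) (hxa : x 0 = a) (hxb : x (Fin.last N) = b)
    (k : ℕ) (p : ℕ) (hp : 2 ≤ p) (T : ℝ) (hT : 0 < T)
    (u u' r r' w w' ph s : ℝ → Fin N → Polynomial ℝ)
    (hdeg : ∀ t ∈ Set.Icc (0:ℝ) T,
      FW.memV k (u t) ∧ FW.memV k (u' t) ∧ FW.memV k (r t) ∧ FW.memV k (r' t)
        ∧ FW.memV k (w t) ∧ FW.memV k (w' t) ∧ FW.memV k (ph t) ∧ FW.memV k (s t))
    (hderu : ∀ t ∈ Set.Icc (0:ℝ) T, ∀ (j : Fin N) (m : ℕ),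
      HasDerivWithinAt (fun σ => (u σ j).coeff m) ((u' t j).coeff m) (Set.Icc (0:ℝ) T) t)
    (hderr : ∀ t ∈ Set.Icc (0:ℝ) T, ∀ (j : Fin N) (m : ℕ),
      HasDerivWithinAt (fun σ => (r σ j).coeff m) ((r' t j).coeff m) (Set.Icc (0:ℝ) T) t)
    (hderw : ∀ t ∈ Set.Icc (0:ℝ) T, ∀ (j : Fin N) (m : ℕ),
      HasDerivWithinAt (fun σ => (w σ j).coeff m) ((w' t j).coeff m) (Set.Icc (0:ℝ) T) t)
    (heq1 : ∀ t ∈ Set.Icc (0:ℝ) T, ∀ (j : Fin N), ∀ φ : Polynomial ℝ,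
      φ.degree ≤ (k : WithBot ℕ) →
      FW.ipj x (u t) j φ - FW.bdj x (FW.trA x (r t)) j φ
          + FW.ipj x (r t) j (Polynomial.derivative φ)
        = FW.ipj x (w t) j φ)
    (heq2 : ∀ t ∈ Set.Icc (0:ℝ) T, ∀ (j : Fin N), ∀ φ : Polynomial ℝ,
      φ.degree ≤ (k : WithBot ℕ) →
      FW.ipj x (r t) j φ - FW.bdj x (FW.trA x (u t)) j φ
          + FW.ipj x (u t) j (Polynomial.derivative φ) = 0)
    (heq3 : ∀ t ∈ Set.Icc (0:ℝ) T, ∀ (j : Fin N), ∀ φ : Polynomial ℝ,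
      φ.degree ≤ (k : WithBot ℕ) →
      FW.ipj x (w' t) j φ + FW.ipj x (s t) j φ
        = FW.bdj x (FW.trA x (ph t)) j φ
          - FW.ipj x (ph t) j (Polynomial.derivative φ))
    (heq4 : ∀ t ∈ Set.Icc (0:ℝ) T, ∀ (j : Fin N), ∀ φ : Polynomial ℝ,
      φ.degree ≤ (k : WithBot ℕ) →
      FW.ipj x (ph t) j φ
        = FW.bdj x (FW.trA x (s t)) j φ
          - FW.ipj x (s t) j (Polynomial.derivative φ) - FW.ipj x (u t) j φ)
    (heq5 : ∀ t ∈ Set.Icc (0:ℝ) T, ∀ (j : Fin N), ∀ φ : Polynomial ℝ,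
      φ.degree ≤ (k : WithBot ℕ) →
      FW.ipj x (s t) j φ
        = FW.bdj x (fun i => FW.consFlux p (FW.trM x (u t) i) (FW.trP x (u t) i)) j φ
          - FW.ipfj x (fun w => w ^ p / (p : ℝ)) (u t) j (Polynomial.derivative φ)) :
    (∀ t ∈ Set.Icc (0:ℝ) T,
      HasDerivWithinAt (fun σ => ∑ j : Fin N, ∫ y in (x j.castSucc)..(x j.succ), (w σ j).eval y) 0 (Set.Icc (0:ℝ) T) t)
    ∧ (∀ t ∈ Set.Icc (0:ℝ) T,
      HasDerivWithinAt (fun σ => ∑ j : Fin N, ∫ y in (x j.castSucc)..(x j.succ), ((u σ j).eval y) ^ 2) 0 (Set.Icc (0:ℝ) T) t) :=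
  stmt16_general x k p T hT u u' r r' w w' ph s hdeg hderu hderr hderw heq1 heq2 heq3 heq4 heq5
end
end

section
/- Suppose (u_h, r_h, w_h, p_h, s_h) solves the dissipative semi-discrete LDG Scheme D2 on [0,T]. Then for every t ∈ [0,T] the energy identity ∫_a^b ( s_h + ∂_t u_h )² dx + ∫_a^b ( p_h + ∂_t r_h )² dx + ∫_a^b u_h ( p_h + ∂_t r_h ) dx = 0 holds. -/
/-!
Differentiate equations (i) and (ii) in time, which is legitimate because they are linear in the
coefficients of `u_h, r_h, w_h`. Testing the differentiated (i) plus (iii) with `S = s_h + ∂ₜu_h`,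
and the differentiated (ii) plus (iv) with `P = p_h + ∂ₜr_h`, gives
`‖S‖² = L⁻(P, S)` and `‖P‖² + (u_h, P) = L⁺(S, P)`. Cellwise integration by parts shows
`L⁻(P, S) + L⁺(S, P) = 0`: the interface terms telescope around the periodic mesh.
-/

open Polynomial Set

noncomputable section

theorem HasDerivWithinAt.eq_zero_of_eqOn_zero {f : ℝ → ℝ} {f' t : ℝ} {S : Set ℝ}
    (hf : HasDerivWithinAt f f' S t) (hS : UniqueDiffWithinAt ℝ S t) (ht : t ∈ S)
    (h0 : Set.EqOn f 0 S) : f' = 0 :=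
  hS.eq_deriv _ hf ((hasDerivWithinAt_const t S 0).congr h0 (h0 ht))

theorem Polynomial.linearMap_apply_eq_sum_coeff_mul {k : ℕ} (L : ℝ[X] →ₗ[ℝ] ℝ) {q : ℝ[X]}
    (hq : q.degree ≤ (k : WithBot ℕ)) :
    L q = ∑ m ∈ Finset.range (k + 1), q.coeff m * L (X ^ m) := by
  conv_lhs => rw [q.as_sum_range' (k + 1) (Nat.lt_succ_of_le (natDegree_le_iff_degree_le.2 hq))]
  simp only [map_sum, ← smul_X_eq_monomial, map_smul, smul_eq_mul]

theorem hasDerivWithinAt_linearMap_of_coeff {k : ℕ} {S : Set ℝ} {t : ℝ} {v : ℝ → ℝ[X]}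
    {v' : ℝ[X]} (L : ℝ[X] →ₗ[ℝ] ℝ) (hv : ∀ σ ∈ S, (v σ).degree ≤ (k : WithBot ℕ)) (ht : t ∈ S)
    (hv' : v'.degree ≤ (k : WithBot ℕ))
    (hcoeff : ∀ m, HasDerivWithinAt (fun σ => (v σ).coeff m) (v'.coeff m) S t) :
    HasDerivWithinAt (fun σ => L (v σ)) (L v') S t := by
  rw [linearMap_apply_eq_sum_coeff_mul L hv']
  exact (HasDerivWithinAt.fun_sum fun m _ => (hcoeff m).mul_const _).congr
    (fun σ hσ => linearMap_apply_eq_sum_coeff_mul L (hv σ hσ))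
    (linearMap_apply_eq_sum_coeff_mul L (hv t ht))

namespace FW

variable {N : ℕ}

def cellPairing (x : Fin (N + 1) → ℝ) (j : Fin N) (φ : ℝ[X]) : ℝ[X] →ₗ[ℝ] ℝ where
  toFun q := ∫ y in (x j.castSucc)..(x j.succ), q.eval y * φ.eval y
  map_add' q q' := by
    simp only [eval_add, add_mul]
    exact intervalIntegral.integral_add ((q.continuous.mul φ.continuous).intervalIntegrable _ _)
      ((q'.continuous.mul φ.continuous).intervalIntegrable _ _)
  map_smul' c q := by
    simp only [eval_smul, smul_eq_mul, mul_assoc, intervalIntegral.integral_const_mul,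
      RingHom.id_apply]

theorem memV_add {k : ℕ} {u v : Fin N → ℝ[X]} (hu : memV k u) (hv : memV k v) :
    memV k (u + v) :=
  fun j => (degree_add_le _ _).trans (max_le (hu j) (hv j))

theorem ipj_eq_cellPairing (x : Fin (N + 1) → ℝ) (u : Fin N → ℝ[X]) (j : Fin N) (φ : ℝ[X]) :
    ipj x u j φ = cellPairing x j φ (u j) := rfl

theorem ipj_add (x : Fin (N + 1) → ℝ) (u v : Fin N → ℝ[X]) (j : Fin N) (φ : ℝ[X]) :
    ipj x (u + v) j φ = ipj x u j φ + ipj x v j φ := by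
  simp only [ipj_eq_cellPairing, Pi.add_apply, map_add]

theorem trM_add (x : Fin (N + 1) → ℝ) (u v : Fin N → ℝ[X]) :
    trM x (u + v) = trM x u + trM x v := by
  ext j; simp [trM]

theorem trP_add [NeZero N] (x : Fin (N + 1) → ℝ) (u v : Fin N → ℝ[X]) :
    trP x (u + v) = trP x u + trP x v := by
  ext j; simp [trP]

theorem bdj_add [NeZero N] (x : Fin (N + 1) → ℝ) (g h : Fin N → ℝ) (j : Fin N) (φ : ℝ[X]) :
    bdj x (g + h) j φ = bdj x g j φ + bdj x h j φ := by
  simp only [bdj, Pi.add_apply]; ring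

theorem ipj_derivative_add_ipj_derivative (x : Fin (N + 1) → ℝ) (ω φ : Fin N → ℝ[X])
    (j : Fin N) :
    ipj x ω j (derivative (φ j)) + ipj x φ j (derivative (ω j))
      = (ω j).eval (x j.succ) * (φ j).eval (x j.succ)
        - (ω j).eval (x j.castSucc) * (φ j).eval (x j.castSucc) := by
  have hibp := intervalIntegral.integral_mul_deriv_eq_deriv_mul
    (fun y _ => (ω j).hasDerivAt y) (fun y _ => (φ j).hasDerivAt y)
    ((derivative (ω j)).continuous.intervalIntegrable (x j.castSucc) (x j.succ))
    ((derivative (φ j)).continuous.intervalIntegrable _ _)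
  simp only [ipj]
  rw [hibp]
  simp only [mul_comm ((φ j).eval _)]
  ring

theorem Lm_add_Lp_eq_zero [NeZero N] (x : Fin (N + 1) → ℝ) (ω φ : Fin N → ℝ[X]) :
    Lm x ω φ + Lp x φ ω = 0 := by
  set G : Fin N → ℝ := fun j => trP x φ j * trM x ω j
  have cell : ∀ j, -(ipj x ω j (derivative (φ j))) + bdj x (trM x ω) j (φ j)
      + (-(ipj x φ j (derivative (ω j))) + bdj x (trP x φ) j (ω j)) = G j - G (j - 1) := by
    intro j
    have hibp := ipj_derivative_add_ipj_derivative x ω φ j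
    simp only [G, bdj, trM, trP, sub_add_cancel] at hibp ⊢
    linarith
  rw [Lm, Lp, ← Finset.sum_add_distrib, Finset.sum_congr rfl fun j _ => cell j,
    Finset.sum_sub_distrib, sub_eq_zero]
  exact ((Equiv.subRight 1).sum_comp G).symm

theorem energy_identity [NeZero N] {x : Fin (N + 1) → ℝ} {k : ℕ}
    (u u' r' w' ph s : Fin N → ℝ[X]) (hS : memV k (s + u')) (hP : memV k (ph + r'))
    (h1 : ∀ j φ, φ.degree ≤ (k : WithBot ℕ) →
      ipj x u' j φ - bdj x (trM x r') j φ + ipj x r' j (derivative φ) = ipj x w' j φ)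
    (h2 : ∀ j φ, φ.degree ≤ (k : WithBot ℕ) →
      ipj x r' j φ - bdj x (trP x u') j φ + ipj x u' j (derivative φ) = 0)
    (h3 : ∀ j φ, φ.degree ≤ (k : WithBot ℕ) →
      ipj x w' j φ + ipj x s j φ = bdj x (trM x ph) j φ - ipj x ph j (derivative φ))
    (h4 : ∀ j φ, φ.degree ≤ (k : WithBot ℕ) →
      ipj x ph j φ = bdj x (trP x s) j φ - ipj x s j (derivative φ) - ipj x u j φ) :
    ∑ j, ipj x (s + u') j ((s + u') j) + ∑ j, ipj x (ph + r') j ((ph + r') j)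
      + ∑ j, ipj x u j ((ph + r') j) = 0 := by
  set S := s + u'
  set P := ph + r'
  have hSS : ∑ j, ipj x S j (S j) = Lm x P S := Finset.sum_congr rfl fun j _ => by
    have := h1 j (S j) (hS j)
    have := h3 j (S j) (hS j)
    simp only [S, P, ipj_add, trM_add, bdj_add]
    linarith
  have hPP : ∑ j, (ipj x P j (P j) + ipj x u j (P j)) = Lp x S P :=
    Finset.sum_congr rfl fun j _ => by
      have := h2 j (P j) (hP j)
      have := h4 j (P j) (hP j)
      simp only [S, P, ipj_add, trP_add, bdj_add]
      linarith
  rw [add_assoc, ← Finset.sum_add_distrib, hSS, hPP, Lm_add_Lp_eq_zero]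

section TimeDerivative

variable {k : ℕ} {S : Set ℝ} {t : ℝ} {v : ℝ → Fin N → ℝ[X]} {v' : Fin N → ℝ[X]}

theorem hasDerivWithinAt_ipj (x : Fin (N + 1) → ℝ) (j : Fin N) (φ : ℝ[X])
    (hv : ∀ σ ∈ S, memV k (v σ)) (ht : t ∈ S) (hv' : memV k v')
    (hd : ∀ j m, HasDerivWithinAt (fun σ => (v σ j).coeff m) ((v' j).coeff m) S t) :
    HasDerivWithinAt (fun σ => ipj x (v σ) j φ) (ipj x v' j φ) S t :=
  hasDerivWithinAt_linearMap_of_coeff (cellPairing x j φ) (fun σ hσ => hv σ hσ j) ht (hv' j)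
    (hd j)

theorem hasDerivWithinAt_trM (x : Fin (N + 1) → ℝ) (j : Fin N)
    (hv : ∀ σ ∈ S, memV k (v σ)) (ht : t ∈ S) (hv' : memV k v')
    (hd : ∀ j m, HasDerivWithinAt (fun σ => (v σ j).coeff m) ((v' j).coeff m) S t) :
    HasDerivWithinAt (fun σ => trM x (v σ) j) (trM x v' j) S t :=
  hasDerivWithinAt_linearMap_of_coeff (leval (x j.succ)) (fun σ hσ => hv σ hσ j) ht (hv' j)
    (hd j)

theorem hasDerivWithinAt_trP [NeZero N] (x : Fin (N + 1) → ℝ) (j : Fin N)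
    (hv : ∀ σ ∈ S, memV k (v σ)) (ht : t ∈ S) (hv' : memV k v')
    (hd : ∀ j m, HasDerivWithinAt (fun σ => (v σ j).coeff m) ((v' j).coeff m) S t) :
    HasDerivWithinAt (fun σ => trP x (v σ) j) (trP x v' j) S t :=
  hasDerivWithinAt_linearMap_of_coeff (leval (x (j + 1).castSucc)) (fun σ hσ => hv σ hσ (j + 1))
    ht (hv' (j + 1)) (hd (j + 1))

theorem hasDerivWithinAt_bdj [NeZero N] (x : Fin (N + 1) → ℝ) (j : Fin N) (φ : ℝ[X])
    {g : ℝ → Fin N → ℝ} {g' : Fin N → ℝ} (hg : ∀ i, HasDerivWithinAt (fun σ => g σ i) (g' i) S t) :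
    HasDerivWithinAt (fun σ => bdj x (g σ) j φ) (bdj x g' j φ) S t :=
  ((hg j).mul_const _).sub ((hg (j - 1)).mul_const _)

end TimeDerivative

end FW

theorem stmt18_general {N : ℕ} [NeZero N] (x : Fin (N + 1) → ℝ) (k : ℕ) (T : ℝ) (hT : 0 < T)
    (u u' r r' w w' ph s : ℝ → Fin N → Polynomial ℝ)
    (hdeg : ∀ t ∈ Set.Icc (0:ℝ) T,
      FW.memV k (u t) ∧ FW.memV k (u' t) ∧ FW.memV k (r t) ∧ FW.memV k (r' t)
        ∧ FW.memV k (w t) ∧ FW.memV k (w' t) ∧ FW.memV k (ph t) ∧ FW.memV k (s t))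
    (hderu : ∀ t ∈ Set.Icc (0:ℝ) T, ∀ (j : Fin N) (m : ℕ),
      HasDerivWithinAt (fun σ => (u σ j).coeff m) ((u' t j).coeff m) (Set.Icc (0:ℝ) T) t)
    (hderr : ∀ t ∈ Set.Icc (0:ℝ) T, ∀ (j : Fin N) (m : ℕ),
      HasDerivWithinAt (fun σ => (r σ j).coeff m) ((r' t j).coeff m) (Set.Icc (0:ℝ) T) t)
    (hderw : ∀ t ∈ Set.Icc (0:ℝ) T, ∀ (j : Fin N) (m : ℕ),
      HasDerivWithinAt (fun σ => (w σ j).coeff m) ((w' t j).coeff m) (Set.Icc (0:ℝ) T) t)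
    (heq1 : ∀ t ∈ Set.Icc (0:ℝ) T, ∀ (j : Fin N), ∀ φ : Polynomial ℝ,
      φ.degree ≤ (k : WithBot ℕ) →
      FW.ipj x (u t) j φ - FW.bdj x (FW.trM x (r t)) j φ
          + FW.ipj x (r t) j (Polynomial.derivative φ)
        = FW.ipj x (w t) j φ)
    (heq2 : ∀ t ∈ Set.Icc (0:ℝ) T, ∀ (j : Fin N), ∀ φ : Polynomial ℝ,
      φ.degree ≤ (k : WithBot ℕ) →
      FW.ipj x (r t) j φ - FW.bdj x (FW.trP x (u t)) j φ
          + FW.ipj x (u t) j (Polynomial.derivative φ) = 0)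
    (heq3 : ∀ t ∈ Set.Icc (0:ℝ) T, ∀ (j : Fin N), ∀ φ : Polynomial ℝ,
      φ.degree ≤ (k : WithBot ℕ) →
      FW.ipj x (w' t) j φ + FW.ipj x (s t) j φ
        = FW.bdj x (FW.trM x (ph t)) j φ
          - FW.ipj x (ph t) j (Polynomial.derivative φ))
    (heq4 : ∀ t ∈ Set.Icc (0:ℝ) T, ∀ (j : Fin N), ∀ φ : Polynomial ℝ,
      φ.degree ≤ (k : WithBot ℕ) →
      FW.ipj x (ph t) j φ
        = FW.bdj x (FW.trP x (s t)) j φ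
          - FW.ipj x (s t) j (Polynomial.derivative φ) - FW.ipj x (u t) j φ) :
    ∀ t ∈ Set.Icc (0:ℝ) T,
      (∑ j : Fin N, ∫ y in (x j.castSucc)..(x j.succ),
          ((s t j).eval y + (u' t j).eval y) ^ 2)
        + (∑ j : Fin N, ∫ y in (x j.castSucc)..(x j.succ),
          ((ph t j).eval y + (r' t j).eval y) ^ 2)
        + (∑ j : Fin N, ∫ y in (x j.castSucc)..(x j.succ),
          (u t j).eval y * ((ph t j).eval y + (r' t j).eval y)) = 0 := by
  intro t ht
  have hU : UniqueDiffWithinAt ℝ (Set.Icc (0:ℝ) T) t := uniqueDiffOn_Icc hT t ht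
  obtain ⟨-, hu', -, hr', -, hw', hph, hs⟩ := hdeg t ht
  have hu : ∀ σ ∈ Set.Icc (0:ℝ) T, FW.memV k (u σ) := fun σ hσ => (hdeg σ hσ).1
  have hr : ∀ σ ∈ Set.Icc (0:ℝ) T, FW.memV k (r σ) := fun σ hσ => (hdeg σ hσ).2.2.1
  have hw : ∀ σ ∈ Set.Icc (0:ℝ) T, FW.memV k (w σ) := fun σ hσ => (hdeg σ hσ).2.2.2.2.1
  have Du := fun j φ => FW.hasDerivWithinAt_ipj x j φ hu ht hu' (hderu t ht)
  have Dr := fun j φ => FW.hasDerivWithinAt_ipj x j φ hr ht hr' (hderr t ht)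
  have Dw := fun j φ => FW.hasDerivWithinAt_ipj x j φ hw ht hw' (hderw t ht)
  have h1 : ∀ j φ, φ.degree ≤ (k : WithBot ℕ) →
      FW.ipj x (u' t) j φ - FW.bdj x (FW.trM x (r' t)) j φ
        + FW.ipj x (r' t) j (derivative φ) = FW.ipj x (w' t) j φ := fun j φ hφ =>
    sub_eq_zero.1 <| ((((Du j φ).sub (FW.hasDerivWithinAt_bdj x j φ fun i =>
      FW.hasDerivWithinAt_trM x i hr ht hr' (hderr t ht))).add (Dr j _)).sub
      (Dw j φ)).eq_zero_of_eqOn_zero hU ht fun σ hσ => sub_eq_zero.2 (heq1 σ hσ j φ hφ)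
  have h2 : ∀ j φ, φ.degree ≤ (k : WithBot ℕ) →
      FW.ipj x (r' t) j φ - FW.bdj x (FW.trP x (u' t)) j φ
        + FW.ipj x (u' t) j (derivative φ) = 0 := fun j φ hφ =>
    (((Dr j φ).sub (FW.hasDerivWithinAt_bdj x j φ fun i =>
      FW.hasDerivWithinAt_trP x i hu ht hu' (hderu t ht))).add (Du j _)).eq_zero_of_eqOn_zero
      hU ht fun σ hσ => heq2 σ hσ j φ hφ
  have energy := FW.energy_identity (u t) (u' t) (r' t) (w' t) (ph t) (s t)
    (FW.memV_add hs hu') (FW.memV_add hph hr') h1 h2 (heq3 t ht) (heq4 t ht)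
  simpa only [FW.ipj, Pi.add_apply, eval_add, sq] using energy

theorem stmt18 {N : ℕ} [NeZero N] (hN : 1 ≤ N) (a b : ℝ) (hab : a < b)
    (x : Fin (N + 1) → ℝ) (hx : StrictMono x) (hxa : x 0 = a) (hxb : x (Fin.last N) = b)
    (k : ℕ) (p : ℕ) (hp : 2 ≤ p) (T : ℝ) (hT : 0 < T)
    (u u' r r' w w' ph s : ℝ → Fin N → Polynomial ℝ)
    (hdeg : ∀ t ∈ Set.Icc (0:ℝ) T,
      FW.memV k (u t) ∧ FW.memV k (u' t) ∧ FW.memV k (r t) ∧ FW.memV k (r' t)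
        ∧ FW.memV k (w t) ∧ FW.memV k (w' t) ∧ FW.memV k (ph t) ∧ FW.memV k (s t))
    (hderu : ∀ t ∈ Set.Icc (0:ℝ) T, ∀ (j : Fin N) (m : ℕ),
      HasDerivWithinAt (fun σ => (u σ j).coeff m) ((u' t j).coeff m) (Set.Icc (0:ℝ) T) t)
    (hderr : ∀ t ∈ Set.Icc (0:ℝ) T, ∀ (j : Fin N) (m : ℕ),
      HasDerivWithinAt (fun σ => (r σ j).coeff m) ((r' t j).coeff m) (Set.Icc (0:ℝ) T) t)
    (hderw : ∀ t ∈ Set.Icc (0:ℝ) T, ∀ (j : Fin N) (m : ℕ),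
      HasDerivWithinAt (fun σ => (w σ j).coeff m) ((w' t j).coeff m) (Set.Icc (0:ℝ) T) t)
    (heq1 : ∀ t ∈ Set.Icc (0:ℝ) T, ∀ (j : Fin N), ∀ φ : Polynomial ℝ,
      φ.degree ≤ (k : WithBot ℕ) →
      FW.ipj x (u t) j φ - FW.bdj x (FW.trM x (r t)) j φ
          + FW.ipj x (r t) j (Polynomial.derivative φ)
        = FW.ipj x (w t) j φ)
    (heq2 : ∀ t ∈ Set.Icc (0:ℝ) T, ∀ (j : Fin N), ∀ φ : Polynomial ℝ,
      φ.degree ≤ (k : WithBot ℕ) →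
      FW.ipj x (r t) j φ - FW.bdj x (FW.trP x (u t)) j φ
          + FW.ipj x (u t) j (Polynomial.derivative φ) = 0)
    (heq3 : ∀ t ∈ Set.Icc (0:ℝ) T, ∀ (j : Fin N), ∀ φ : Polynomial ℝ,
      φ.degree ≤ (k : WithBot ℕ) →
      FW.ipj x (w' t) j φ + FW.ipj x (s t) j φ
        = FW.bdj x (FW.trM x (ph t)) j φ
          - FW.ipj x (ph t) j (Polynomial.derivative φ))
    (heq4 : ∀ t ∈ Set.Icc (0:ℝ) T, ∀ (j : Fin N), ∀ φ : Polynomial ℝ,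
      φ.degree ≤ (k : WithBot ℕ) →
      FW.ipj x (ph t) j φ
        = FW.bdj x (FW.trP x (s t)) j φ
          - FW.ipj x (s t) j (Polynomial.derivative φ) - FW.ipj x (u t) j φ)
    (heq5 : ∀ t ∈ Set.Icc (0:ℝ) T, ∀ (j : Fin N), ∀ φ : Polynomial ℝ,
      φ.degree ≤ (k : WithBot ℕ) →
      FW.ipj x (s t) j φ
        = FW.bdj x (fun i => FW.godunov (fun w => w ^ p / (p : ℝ)) (FW.trM x (u t) i) (FW.trP x (u t) i)) j φ
          - FW.ipfj x (fun w => w ^ p / (p : ℝ)) (u t) j (Polynomial.derivative φ)) :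
    ∀ t ∈ Set.Icc (0:ℝ) T,
      (∑ j : Fin N, ∫ y in (x j.castSucc)..(x j.succ),
          ((s t j).eval y + (u' t j).eval y) ^ 2)
        + (∑ j : Fin N, ∫ y in (x j.castSucc)..(x j.succ),
          ((ph t j).eval y + (r' t j).eval y) ^ 2)
        + (∑ j : Fin N, ∫ y in (x j.castSucc)..(x j.succ),
          (u t j).eval y * ((ph t j).eval y + (r' t j).eval y)) = 0 :=
  stmt18_general x k T hT u u' r r' w w' ph s hdeg hderu hderr hderw heq1 heq2 heq3 heq4
end
end
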